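/- arXiv:1709.00603 — 3 statements merged into one kernel-verified Lean document; each statement's English description precedes it below -/
import Mathlib

section
/- Let Φ be a crystallographic root system, let R ⊆ Φ be non-empty, and let Φ' be a root subsystem of Φ containing R. If W_{Φ'} = W_R, then L(Φ') = L(R) and L((Φ')^∨) = L(R^∨). -/
/-!
Being crystallographic, every reflection `s_α`, `α ∈ R`, moves a root by an integral multiple of
`α` and a coroot by an integral multiple of `α^∨`, so `W_R` preserves `L(R)` and `L(R^∨)`. Hence
it suffices to write every `β ∈ Φ'` as `w α` with `w ∈ W_R`, `α ∈ R` (then `β^∨ = w α^∨`), using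
only that `s_β ∈ W_{Φ'} = W_R`.

Suppose `β ∉ W_R R`, and choose one vector from each pair `±γ` of the orbit `W_R β`. The product
`π = rootProd` of the linear forms `⟪γ, ·⟫` is multiplied by a constant under each `s_α`,
`α ∈ R`. The only roots on the line `ℝ α` are `α` and `s_α α`, which lie in `W_R R`, so no
factor vanishes identically on the mirror `α^⊥` that `s_α` fixes; hence the constant is `1` and
`π` is `W_R`-invariant. But `s_β` negates the factor `⟪±β, ·⟫` and, by the same argument, fixes
the product of the others, so `π ∘ s_β = -π`, contradicting `s_β ∈ W_R`.
-/

open RealInnerProductSpace Submodule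

variable {V : Type*} [NormedAddCommGroup V] [InnerProductSpace ℝ V] [FiniteDimensional ℝ V]

/-- The orthogonal reflection in the hyperplane `α^⊥`. -/
noncomputable def sRefl (α : V) : V ≃ₗᵢ[ℝ] V := reflection (ℝ ∙ α)ᗮ

/-- `Φ` is a root system in `V`. -/
def IsRootSystem (Φ : Set V) : Prop :=
  Φ.Finite ∧ (0 : V) ∉ Φ ∧ span ℝ Φ = ⊤ ∧
    (∀ α ∈ Φ, ∀ β ∈ Φ, sRefl α β ∈ Φ) ∧
    (∀ α ∈ Φ, ∀ r : ℝ, r • α ∈ Φ → r = 1 ∨ r = -1)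

/-- `Φ` is crystallographic. -/
def IsCrystallographic (Φ : Set V) : Prop :=
  ∀ α ∈ Φ, ∀ β ∈ Φ, ∃ k : ℤ, 2 * ⟪α, β⟫ / ⟪α, α⟫ = (k : ℝ)

/-- `Φ'` is a root subsystem of `Φ`. -/
def IsRootSubsystem (Φ Φ' : Set V) : Prop :=
  Φ' ⊆ Φ ∧ ∀ α ∈ Φ', ∀ β ∈ Φ', sRefl α β ∈ Φ'

/-- The coroot `α^∨ = 2α/(α|α)`. -/
noncomputable def coroot (α : V) : V := (2 / ⟪α, α⟫) • α

/-- The subgroup `W_R` of the orthogonal group of `V` generated by the reflections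
`s_α`, `α ∈ R`. -/
noncomputable def weylGroup (R : Set V) : Subgroup (V ≃ₗᵢ[ℝ] V) :=
  Subgroup.closure (sRefl '' R)

section

variable {E : Type*} [NormedAddCommGroup E] [InnerProductSpace ℝ E]

lemma sRefl_apply (α x : E) : sRefl α x = x - (2 * ⟪α, x⟫ / ⟪α, α⟫) • α := by
  rw [sRefl, reflection_orthogonal_apply, reflection_singleton_apply, real_inner_self_eq_norm_sq]
  simp only [RCLike.ofReal_real_eq_id, id]
  module

lemma sRefl_self (α : E) : sRefl α α = -α :=
  reflection_orthogonalComplement_singleton_eq_neg α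

lemma sRefl_neg (α : E) : sRefl (-α) = sRefl α := by
  simp only [sRefl, ← Set.neg_singleton, span_neg]

lemma sRefl_involutive (α : E) : Function.Involutive (sRefl α) :=
  reflection_reflection _

lemma sRefl_inv (α : E) : (sRefl α)⁻¹ = sRefl α :=
  reflection_inv

lemma sRefl_coroot (α γ : E) :
    sRefl α (coroot γ) = coroot γ - (2 * ⟪γ, α⟫ / ⟪γ, γ⟫) • coroot α := by
  rw [sRefl_apply, coroot, coroot, real_inner_smul_right, real_inner_comm γ α, smul_smul]
  congr 2
  ring

lemma LinearIsometryEquiv.map_coroot (g : E ≃ₗᵢ[ℝ] E) (v : E) : g (coroot v) = coroot (g v) := by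
  rw [coroot, coroot, map_smul, g.inner_map_map]

lemma sRefl_mem_weylGroup {R : Set E} {α : E} (hα : α ∈ R) : sRefl α ∈ weylGroup R :=
  Subgroup.subset_closure ⟨α, hα, rfl⟩

@[elab_as_elim]
lemma weylGroup_induction {R : Set E} {p : (E ≃ₗᵢ[ℝ] E) → Prop} (sRefl_mem : ∀ α ∈ R, p (sRefl α))
    (one : p 1) (mul : ∀ u v, p u → p v → p (u * v)) {w : E ≃ₗᵢ[ℝ] E} (hw : w ∈ weylGroup R) :
    p w := by
  induction hw using Subgroup.closure_induction'' with
  | mem _ h => obtain ⟨α, hα, rfl⟩ := h; exact sRefl_mem α hα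
  | inv_mem _ h => obtain ⟨α, hα, rfl⟩ := h; rw [sRefl_inv]; exact sRefl_mem α hα
  | one => exact one
  | mul u v _ _ hu hv => exact mul u v hu hv

lemma mapsTo_of_mem_weylGroup {R S : Set E} (hS : ∀ α ∈ R, Set.MapsTo (sRefl α) S S)
    {w : E ≃ₗᵢ[ℝ] E} (hw : w ∈ weylGroup R) : Set.MapsTo w S S :=
  weylGroup_induction hS (Set.mapsTo_id S) (fun _ _ hu hv => hu.comp hv) hw

lemma sRefl_mapsTo_span {S : Set E} {α : E} (h : ∀ γ ∈ S, sRefl α γ ∈ span ℤ S) :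
    Set.MapsTo (sRefl α) (span ℤ S) (span ℤ S) := by
  intro v hv
  induction hv using span_induction with
  | mem γ hγ => exact h γ hγ
  | zero => simp
  | add x y _ _ hx hy => rw [map_add]; exact add_mem hx hy
  | smul n x _ hx => rw [map_zsmul]; exact zsmul_mem hx n

lemma mapsTo_span_of_mem_weylGroup {Φ R : Set E} (hcr : IsCrystallographic Φ) (hRΦ : R ⊆ Φ)
    {w : E ≃ₗᵢ[ℝ] E} (hw : w ∈ weylGroup R) :
    Set.MapsTo w (span ℤ R) (span ℤ R) := by
  refine mapsTo_of_mem_weylGroup (fun α hα => sRefl_mapsTo_span fun γ hγ => ?_) hw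
  obtain ⟨k, hk⟩ := hcr α (hRΦ hα) γ (hRΦ hγ)
  rw [sRefl_apply, hk, Int.cast_smul_eq_zsmul]
  exact sub_mem (subset_span hγ) (zsmul_mem (subset_span hα) k)

lemma mapsTo_span_coroot_of_mem_weylGroup {Φ R : Set E} (hcr : IsCrystallographic Φ)
    (hRΦ : R ⊆ Φ) {w : E ≃ₗᵢ[ℝ] E} (hw : w ∈ weylGroup R) :
    Set.MapsTo w (span ℤ (coroot '' R)) (span ℤ (coroot '' R)) := by
  refine mapsTo_of_mem_weylGroup (fun α hα => sRefl_mapsTo_span ?_) hw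
  rintro _ ⟨γ, hγ, rfl⟩
  obtain ⟨k, hk⟩ := hcr γ (hRΦ hγ) α (hRΦ hα)
  rw [sRefl_coroot, hk, Int.cast_smul_eq_zsmul]
  exact sub_mem (subset_span (Set.mem_image_of_mem _ hγ))
    (zsmul_mem (subset_span (Set.mem_image_of_mem _ hα)) k)

lemma exists_mem_forall_inner_ne_zero (K : Submodule ℝ E) (T : Finset E) (hT : ∀ γ ∈ T, γ ∉ Kᗮ) :
    ∃ x ∈ K, ∀ γ ∈ T, ⟪γ, x⟫ ≠ 0 := by
  obtain ⟨x, hxK, hx⟩ := Module.Dual.exists_forall_mem_ne_zero_of_forall_exists K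
    (fun γ : T => innerₛₗ ℝ (γ : E)) fun γ => by
      obtain ⟨u, hu, h⟩ := not_forall₂.1 ((mem_orthogonal _ _).not.1 (hT γ γ.2))
      exact ⟨u, hu, by simpa [real_inner_comm] using h⟩
  exact ⟨x, hxK, fun γ hγ => hx ⟨γ, hγ⟩⟩

lemma exists_forall_inner_ne_zero (T : Finset E) (h0 : (0 : E) ∉ T) :
    ∃ x, ∀ γ ∈ T, ⟪γ, x⟫ ≠ 0 := by
  obtain ⟨x, -, hx⟩ := exists_mem_forall_inner_ne_zero ⊤ T fun γ hγ => by
    rw [top_orthogonal_eq_bot, mem_bot]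
    exact ne_of_mem_of_not_mem hγ h0
  exact ⟨x, hx⟩

lemma exists_halving_subset (T : Finset E) (h0 : (0 : E) ∉ T) (hT : ∀ γ ∈ T, -γ ∈ T) :
    ∃ P ⊆ T, (∀ γ ∈ P, -γ ∉ P) ∧ ∀ γ ∈ T, γ ∈ P ∨ -γ ∈ P := by
  obtain ⟨x₀, hx₀⟩ := exists_forall_inner_ne_zero T h0
  refine ⟨T.filter (0 < ⟪·, x₀⟫), Finset.filter_subset _ _, fun γ hγ hneg => ?_, fun γ hγ => ?_⟩
  · simp only [Finset.mem_filter, inner_neg_left] at hγ hneg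
    linarith [hγ.2, hneg.2]
  · rcases (hx₀ γ hγ).lt_or_gt with h | h
    · exact .inr (Finset.mem_filter.2 ⟨hT γ hγ, by rwa [inner_neg_left, neg_pos]⟩)
    · exact .inl (Finset.mem_filter.2 ⟨hγ, h⟩)

def rootProd (P : Finset E) (x : E) : ℝ :=
  ∏ γ ∈ P, ⟪γ, x⟫

lemma exists_rootProd_ne_zero {P : Finset E} (h0 : (0 : E) ∉ P) : ∃ x, rootProd P x ≠ 0 := by
  obtain ⟨x, hx⟩ := exists_forall_inner_ne_zero P h0
  exact ⟨x, Finset.prod_ne_zero_iff.2 hx⟩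

lemma exists_rootProd_apply_eq_mul {P : Finset E} (hP : ∀ γ ∈ P, -γ ∉ P) {t : E ≃ₗᵢ[ℝ] E}
    (ht : Function.Involutive t) (htP : ∀ γ ∈ P, t γ ∈ P ∨ -t γ ∈ P) :
    ∃ c : ℝ, ∀ x, rootProd P (t x) = c * rootProd P x := by
  classical
  -- `m γ` is the representative in `P` of the line through `t γ`; it is an involution of `P`
  let m : E → E := fun γ => if t γ ∈ P then t γ else -t γ
  have hm : ∀ γ ∈ P, m γ ∈ P := fun γ hγ => by
    by_cases h : t γ ∈ P
    · simp [m, h]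
    · simpa [m, h] using (htP γ hγ).resolve_left h
  have hmm : ∀ γ ∈ P, m (m γ) = γ := fun γ hγ => by
    by_cases h : t γ ∈ P
    · simp [m, h, ht γ, hγ]
    · simp [m, h, ht γ, hP γ hγ]
  refine ⟨∏ γ ∈ P, if t γ ∈ P then 1 else -1, fun x => ?_⟩
  calc rootProd P (t x)
      = ∏ γ ∈ P, (if t γ ∈ P then 1 else -1) * ⟪m γ, x⟫ := by
        refine Finset.prod_congr rfl fun γ _ => ?_
        rw [← t.inner_map_map, ht x]
        by_cases h : t γ ∈ P <;> simp [m, h, inner_neg_left]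
    _ = _ := by
        rw [Finset.prod_mul_distrib, rootProd]
        congr 1
        exact Finset.prod_nbij' m m hm hm hmm hmm fun _ _ => rfl

lemma rootProd_sRefl_of_forall_notMem {P : Finset E} (hP : ∀ γ ∈ P, -γ ∉ P) {α : E}
    (hαP : ∀ γ ∈ P, sRefl α γ ∈ P ∨ -sRefl α γ ∈ P) (hα : ∀ γ ∈ P, γ ∉ ℝ ∙ α) (x : E) :
    rootProd P (sRefl α x) = rootProd P x := by
  obtain ⟨c, hc⟩ := exists_rootProd_apply_eq_mul hP (sRefl_involutive α) hαP
  -- evaluate at a point of the mirror `α^⊥` off all the hyperplanes `γ^⊥`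
  obtain ⟨y, hy, hyP⟩ := exists_mem_forall_inner_ne_zero (ℝ ∙ α)ᗮ P
    (by simpa only [orthogonal_orthogonal] using hα)
  have hc1 : c = 1 := by
    have h := hc y
    rw [sRefl, reflection_mem_subspace_eq_self hy] at h
    exact (mul_eq_right₀ (Finset.prod_ne_zero_iff.2 hyP)).1 h.symm
  rw [hc, hc1, one_mul]

lemma rootProd_sRefl_self {P : Finset E} (hP : ∀ γ ∈ P, -γ ∉ P) {β : E} (hβ : β ∈ P)
    (hβP : ∀ γ ∈ P, sRefl β γ ∈ P ∨ -sRefl β γ ∈ P)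
    (hβline : ∀ γ ∈ P, γ ∈ ℝ ∙ β → γ = β ∨ γ = -β) (x : E) :
    rootProd P (sRefl β x) = -rootProd P x := by
  classical
  have herase : rootProd (P.erase β) (sRefl β x) = rootProd (P.erase β) x := by
    refine rootProd_sRefl_of_forall_notMem
      (fun γ hγ hneg => hP γ (Finset.mem_of_mem_erase hγ) (Finset.mem_of_mem_erase hneg))
      (fun γ hγ => ?_) (fun γ hγ hline => ?_) x
    · obtain ⟨hγβ, hγ⟩ := Finset.mem_erase.1 hγ
      refine (hβP γ hγ).imp (fun h => Finset.mem_erase.2 ⟨fun hs => ?_, h⟩)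
        fun h => Finset.mem_erase.2 ⟨fun hs => hγβ ?_, h⟩
      · rw [← sRefl_involutive β γ, hs, sRefl_self] at hγ
        exact hP β hβ hγ
      · rw [← sRefl_involutive β γ, ← neg_neg (sRefl β γ), hs, map_neg, sRefl_self, neg_neg]
    · obtain ⟨hγβ, hγ⟩ := Finset.mem_erase.1 hγ
      rcases hβline γ hγ hline with rfl | rfl
      exacts [hγβ rfl, hP β hβ hγ]
  rw [rootProd, rootProd, ← Finset.mul_prod_erase P _ hβ, ← Finset.mul_prod_erase P _ hβ]
  rw [rootProd, rootProd] at herase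
  rw [herase, ← (sRefl β).inner_map_map, sRefl_involutive β x, sRefl_self, inner_neg_left, neg_mul]

lemma rootProd_apply_of_mem_weylGroup {P : Finset E} (hP : ∀ γ ∈ P, -γ ∉ P) {R : Set E}
    (hRP : ∀ α ∈ R, ∀ γ ∈ P, sRefl α γ ∈ P ∨ -sRefl α γ ∈ P) (hR : ∀ α ∈ R, ∀ γ ∈ P, γ ∉ ℝ ∙ α)
    {w : E ≃ₗᵢ[ℝ] E} (hw : w ∈ weylGroup R) (x : E) : rootProd P (w x) = rootProd P x := by
  revert x
  exact weylGroup_induction (fun α hα => rootProd_sRefl_of_forall_notMem hP (hRP α hα) (hR α hα))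
    (fun _ => rfl) (fun u v hu hv x => (hu (v x)).trans (hv x)) hw

lemma sRefl_notMem_weylGroup {D : Finset E} (h0 : (0 : E) ∉ D) (hDneg : ∀ γ ∈ D, -γ ∈ D)
    {R : Set E} (hRD : ∀ α ∈ R, ∀ γ ∈ D, sRefl α γ ∈ D) (hR : ∀ α ∈ R, ∀ γ ∈ D, γ ∉ ℝ ∙ α)
    {β : E} (hβ : β ∈ D) (hβline : ∀ γ ∈ D, γ ∈ ℝ ∙ β → γ = β ∨ γ = -β) :
    sRefl β ∉ weylGroup R := by
  intro hsβ
  obtain ⟨P, hPD, hP, hDP⟩ := exists_halving_subset D h0 hDneg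
  have hwP : ∀ w ∈ weylGroup R, ∀ γ ∈ P, w γ ∈ P ∨ -w γ ∈ P := fun w hw γ hγ =>
    hDP _ (mapsTo_of_mem_weylGroup (S := D) hRD hw (hPD hγ))
  obtain ⟨β', hβ'P, hβ'β, hβ'line⟩ : ∃ β' ∈ P, sRefl β' = sRefl β ∧
      ∀ γ ∈ P, γ ∈ ℝ ∙ β' → γ = β' ∨ γ = -β' := by
    rcases hDP β hβ with h | h
    · exact ⟨β, h, rfl, fun γ hγ => hβline γ (hPD hγ)⟩
    · refine ⟨-β, h, sRefl_neg β, fun γ hγ hline => ?_⟩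
      rw [neg_neg, or_comm]
      exact hβline γ (hPD hγ) (by simpa only [← Set.neg_singleton, span_neg] using hline)
  obtain ⟨x, hx⟩ := exists_rootProd_ne_zero fun h => h0 (hPD h)
  have hinv := rootProd_apply_of_mem_weylGroup hP
    (fun α hα => hwP _ (sRefl_mem_weylGroup hα))
    (fun α hα γ hγ => hR α hα γ (hPD hγ)) hsβ x
  rw [← hβ'β, rootProd_sRefl_self hP hβ'P (hβ'β ▸ hwP _ hsβ) hβ'line] at hinv
  exact hx (self_eq_neg.1 hinv.symm)

lemma eq_or_eq_neg_of_mem_span_singleton {Φ : Set E}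
    (hred : ∀ α ∈ Φ, ∀ r : ℝ, r • α ∈ Φ → r = 1 ∨ r = -1) {α γ : E} (hα : α ∈ Φ) (hγ : γ ∈ Φ)
    (h : γ ∈ ℝ ∙ α) : γ = α ∨ γ = -α := by
  obtain ⟨r, rfl⟩ := mem_span_singleton.1 h
  rcases hred α hα r hγ with rfl | rfl <;> simp

theorem exists_apply_eq_of_sRefl_mem_weylGroup {Φ R : Set E} (hfin : Φ.Finite)
    (h0 : (0 : E) ∉ Φ) (hRΦ : R ⊆ Φ) (hstab : ∀ α ∈ R, Set.MapsTo (sRefl α) Φ Φ)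
    (hred : ∀ α ∈ Φ, ∀ r : ℝ, r • α ∈ Φ → r = 1 ∨ r = -1) {β : E} (hβ : β ∈ Φ)
    (hsβ : sRefl β ∈ weylGroup R) : ∃ w ∈ weylGroup R, ∃ α ∈ R, w α = β := by
  by_contra! hβR
  have hDfin : {v | ∃ w ∈ weylGroup R, w β = v}.Finite :=
    hfin.subset <| by rintro _ ⟨w, hw, rfl⟩; exact mapsTo_of_mem_weylGroup hstab hw hβ
  have hD (v : E) : v ∈ hDfin.toFinset ↔ ∃ w ∈ weylGroup R, w β = v := hDfin.mem_toFinset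
  have hDΦ (v : E) (hv : v ∈ hDfin.toFinset) : v ∈ Φ := by
    obtain ⟨w, hw, rfl⟩ := (hD v).1 hv
    exact mapsTo_of_mem_weylGroup hstab hw hβ
  refine sRefl_notMem_weylGroup (D := hDfin.toFinset) (fun h => h0 (hDΦ 0 h)) (fun γ hγ => ?_)
    (fun α hα γ hγ => ?_) (fun α hα γ hγ hline => ?_) ((hD β).2 ⟨1, one_mem _, rfl⟩)
    (fun γ hγ => eq_or_eq_neg_of_mem_span_singleton hred hβ (hDΦ γ hγ)) hsβ
  · obtain ⟨u, hu, rfl⟩ := (hD γ).1 hγ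
    exact (hD _).2 ⟨u * sRefl β, mul_mem hu hsβ, by simp [sRefl_self]⟩
  · obtain ⟨u, hu, rfl⟩ := (hD γ).1 hγ
    exact (hD _).2 ⟨sRefl α * u, mul_mem (sRefl_mem_weylGroup hα) hu, rfl⟩
  · obtain ⟨u, hu, rfl⟩ := (hD γ).1 hγ
    rcases eq_or_eq_neg_of_mem_span_singleton hred (hRΦ hα) (hDΦ _ hγ) hline with h | h
    · exact hβR u⁻¹ (inv_mem hu) α hα (by simp [← h])
    · exact hβR (u⁻¹ * sRefl α) (mul_mem (inv_mem hu) (sRefl_mem_weylGroup hα)) α hα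
        (by simp [sRefl_self, ← h])

end

theorem stmt_1_general (Φ R Φ' : Set V) (hΦ : IsRootSystem Φ) (hcr : IsCrystallographic Φ)
    (hRΦ : R ⊆ Φ)
    (hsub : IsRootSubsystem Φ Φ') (hRΦ' : R ⊆ Φ')
    (hW : weylGroup Φ' = weylGroup R) :
    span ℤ Φ' = span ℤ R ∧ span ℤ (coroot '' Φ') = span ℤ (coroot '' R) := by
  obtain ⟨hfin, h0, -, hstab, hred⟩ := hΦ
  have horbit (β : V) (hβ : β ∈ Φ') : ∃ w ∈ weylGroup R, ∃ α ∈ R, w α = β :=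
    exists_apply_eq_of_sRefl_mem_weylGroup hfin h0 hRΦ (fun α hα => hstab α (hRΦ hα)) hred
      (hsub.1 hβ) (hW ▸ sRefl_mem_weylGroup hβ)
  refine ⟨le_antisymm (span_le.2 fun β hβ => ?_) (span_mono hRΦ'),
    le_antisymm (span_le.2 ?_) (span_mono (Set.image_mono hRΦ'))⟩
  · obtain ⟨w, hw, α, hα, rfl⟩ := horbit β hβ
    exact mapsTo_span_of_mem_weylGroup hcr hRΦ hw (subset_span hα)
  · rintro _ ⟨β, hβ, rfl⟩
    obtain ⟨w, hw, α, hα, rfl⟩ := horbit β hβ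
    rw [SetLike.mem_coe, ← w.map_coroot]
    exact mapsTo_span_coroot_of_mem_weylGroup hcr hRΦ hw (subset_span (Set.mem_image_of_mem _ hα))

theorem stmt_1 (Φ R Φ' : Set V) (hΦ : IsRootSystem Φ) (hcr : IsCrystallographic Φ)
    (hRΦ : R ⊆ Φ) (hRne : R.Nonempty)
    (hsub : IsRootSubsystem Φ Φ') (hRΦ' : R ⊆ Φ')
    (hW : weylGroup Φ' = weylGroup R) :
    span ℤ Φ' = span ℤ R ∧ span ℤ (coroot '' Φ') = span ℤ (coroot '' R) :=
  stmt_1_general Φ R Φ' hΦ hcr hRΦ hsub hRΦ' hW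
end

section
/- Let Φ be a crystallographic root system, let Φ'' be a root subsystem of Φ, and let γ ∈ Φ be a root of minimal squared length in Φ (a short root), i.e. (γ|γ) ≤ (β|β) for every β ∈ Φ. If γ = β_1 + β_2 + ⋯ + β_m for some (not necessarily distinct) roots β_1, …, β_m ∈ Φ'', then γ ∈ Φ''. -/
open RealInnerProductSpace Submodule

variable {V : Type*} [NormedAddCommGroup V] [InnerProductSpace ℝ V] [FiniteDimensional ℝ V]

/-!
Induction on the number of summands. Since `(γ|γ) = ∑ (γ|βᵢ) > 0`, some summand `β` has
`(γ|β) > 0`. Unless `β = γ`, strict Cauchy–Schwarz gives `⟨γ, β^∨⟩ ⟨β, γ^∨⟩ < 4`, and shortness of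
`γ` gives `0 < ⟨γ, β^∨⟩ ≤ ⟨β, γ^∨⟩`, so the integer `⟨γ, β^∨⟩` is `1` and `s_β γ = γ - β`. This is
again a short root, a sum of fewer roots of `Φ''`, hence in `Φ''` by induction, and then so is
`γ = s_β (γ - β)`.
-/

section

variable {E : Type*} [NormedAddCommGroup E] [InnerProductSpace ℝ E]

lemma sRefl_sRefl (α x : E) : sRefl α (sRefl α x) = x :=
  reflection_reflection _ x

lemma exists_mem_inner_pos_of_eq_sum {γ : E} (hγ : γ ≠ 0) {l : List E} (hsum : γ = l.sum) :
    ∃ β ∈ l, 0 < ⟪γ, β⟫ := by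
  apply List.exists_lt_of_sum_lt
  have hinner : ⟪γ, l.sum⟫ = (l.map (⟪γ, ·⟫)).sum := map_list_sum (innerₛₗ ℝ γ) l
  rw [← hsum] at hinner
  simpa [← hinner] using real_inner_self_pos.2 hγ

lemma inner_sq_lt_of_ne_pos_smul {x y : E} (hpos : 0 < ⟪x, y⟫)
    (hne : ∀ r : ℝ, 0 < r → y ≠ r • x) : ⟪x, y⟫ ^ 2 < ⟪x, x⟫ * ⟪y, y⟫ := by
  have hlt : ⟪x, y⟫ < ‖x‖ * ‖y‖ := by
    refine (real_inner_le_norm x y).lt_of_ne fun heq => ?_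
    have hone : ⟪x, y⟫ / (‖x‖ * ‖y‖) = 1 := by rw [heq, div_self (heq ▸ hpos.ne')]
    obtain ⟨-, r, hr, hyr⟩ := (real_inner_div_norm_mul_norm_eq_one_iff x y).1 hone
    exact hne r hr hyr
  calc ⟪x, y⟫ ^ 2 < (‖x‖ * ‖y‖) ^ 2 := pow_lt_pow_left₀ hlt hpos.le two_ne_zero
    _ = ⟪x, x⟫ * ⟪y, y⟫ := by rw [real_inner_self_eq_norm_sq, real_inner_self_eq_norm_sq]; ring

variable {Φ : Set E} {β γ : E}

lemma two_inner_div_eq_one_of_short (hcr : IsCrystallographic Φ) (hβ : β ∈ Φ) (hγ : γ ∈ Φ)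
    (hle : ⟪γ, γ⟫ ≤ ⟪β, β⟫) (hpos : 0 < ⟪γ, β⟫) (hCS : ⟪γ, β⟫ ^ 2 < ⟪γ, γ⟫ * ⟪β, β⟫) :
    2 * ⟪β, γ⟫ / ⟪β, β⟫ = 1 := by
  obtain ⟨k, hk⟩ := hcr β hβ γ hγ
  obtain ⟨m, hm⟩ := hcr γ hγ β hβ
  rw [real_inner_comm] at hk
  have hγγ : 0 < ⟪γ, γ⟫ := real_inner_self_pos.2 fun h => by simp [h] at hpos
  have hββ : 0 < ⟪β, β⟫ := hγγ.trans_le hle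
  have hk_pos : 0 < k := by
    have : (0 : ℝ) < k := hk ▸ div_pos (by linarith) hββ
    exact_mod_cast this
  have hk_le_m : k ≤ m := by
    have : (k : ℝ) ≤ m := hk ▸ hm ▸ div_le_div_of_nonneg_left (by linarith) hγγ hle
    exact_mod_cast this
  have hkm : k * m < 4 := by
    have : (k : ℝ) * m < 4 := by
      rw [← hk, ← hm, div_mul_div_comm, div_lt_iff₀ (by positivity)]
      linarith
    exact_mod_cast this
  rw [real_inner_comm, hk]
  have : k = 1 := by nlinarith
  simp [this]

lemma IsRootSystem.eq_or_sRefl_eq_sub_of_short (hΦ : IsRootSystem Φ)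
    (hcr : IsCrystallographic Φ) (hβ : β ∈ Φ) (hγ : γ ∈ Φ) (hle : ⟪γ, γ⟫ ≤ ⟪β, β⟫)
    (hpos : 0 < ⟪γ, β⟫) : β = γ ∨ sRefl β γ = γ - β := by
  by_cases hpar : ∃ r : ℝ, 0 < r ∧ β = r • γ
  · obtain ⟨r, hr, rfl⟩ := hpar
    rcases hΦ.2.2.2.2 γ hγ r hβ with rfl | rfl
    · exact .inl (one_smul ℝ γ)
    · exact absurd hr (by norm_num)
  push Not at hpar
  have hCS := inner_sq_lt_of_ne_pos_smul hpos hpar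
  right
  rw [sRefl_apply, two_inner_div_eq_one_of_short hcr hβ hγ hle hpos hCS, one_smul]

end

theorem stmt_12 (Φ Φ'' : Set V) (hΦ : IsRootSystem Φ) (hcr : IsCrystallographic Φ)
    (hsub : IsRootSubsystem Φ Φ'')
    (γ : V) (hγ : γ ∈ Φ) (hshort : ∀ β ∈ Φ, ⟪γ, γ⟫ ≤ ⟪β, β⟫)
    (l : List V) (hl : ∀ β ∈ l, β ∈ Φ'') (hsum : γ = l.sum) :
    γ ∈ Φ'' := by
  classical
  obtain ⟨n, hn⟩ : ∃ n, l.length = n := ⟨_, rfl⟩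
  induction n generalizing γ l with
  | zero =>
    rw [List.length_eq_zero_iff.1 hn, List.sum_nil] at hsum
    exact absurd (hsum ▸ hγ) hΦ.2.1
  | succ n ih =>
    have hγ0 : γ ≠ 0 := fun h => hΦ.2.1 (h ▸ hγ)
    obtain ⟨β, hβl, hpos⟩ := exists_mem_inner_pos_of_eq_sum hγ0 hsum
    have hβ : β ∈ Φ'' := hl β hβl
    rcases hΦ.eq_or_sRefl_eq_sub_of_short hcr (hsub.1 hβ) hγ (hshort β (hsub.1 hβ)) hpos
      with rfl | hrefl
    · exact hβ
    have hdiff : γ - β ∈ Φ'' := by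
      refine ih (γ - β) (hrefl ▸ hΦ.2.2.2.1 β (hsub.1 hβ) γ hγ) ?_ (l.erase β)
        (fun δ hδ => hl δ (List.mem_of_mem_erase hδ)) ?_ ?_
      · simpa only [← hrefl, LinearIsometryEquiv.inner_map_map] using hshort
      · rw [hsum, ← List.sum_erase hβl, add_sub_cancel_left]
      · rw [List.length_erase_of_mem hβl, hn, Nat.add_sub_cancel]
    rw [← sRefl_sRefl β γ, hrefl]
    exact hsub.2 β hβ _ hdiff
end

section
/- Let (W, S) be a Coxeter system of type H_3 with S = {s_1, s_2, s_3}, where s_1 and s_3 commute (i.e. s_1 s_3 has order 2), s_1 s_2 has order 5, and s_2 s_3 has order 3. Let P = ⟨s_1, s_3⟩. Then ⟨P, s_2⟩ = W and ⟨P, s_2 s_1 s_2⟩ = W, but there is no p ∈ P with p s_2 p^{-1} = s_2 s_1 s_2; that is, s_2 and s_2 s_1 s_2 are not conjugate under P. -/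
/-!
Write `s₁, s₂, s₃` for `cs.simple 0, cs.simple 1, cs.simple 2`. Since `m(s₁, s₂) = 5` is odd,
`s₁ · s₂s₁s₂ = (s₁s₂)²` has odd order and `s₂ = s₁ (s₁ · s₂s₁s₂)³`; so `⟨P, s₂s₁s₂⟩` contains every
simple reflection. For the failure of conjugacy, map `W` to `S₅` by `s₁ ↦ (1 2)(3 4)`,
`s₂ ↦ (0 1)(2 3)`, `s₃ ↦ (1 4)(2 3)`: the images of `s₁` and `s₃` commute, so the image of `P`
centralizes both, and no permutation centralizing both conjugates `(0 1)(2 3)` to `(0 3)(2 4)`,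
the image of `s₂s₁s₂`.
-/

/-- The Coxeter matrix of type `H₃`, with `m 0 1 = 5`, `m 1 2 = 3`, `m 0 2 = 2`. -/
def H3Matrix : CoxeterMatrix (Fin 3) where
  M := !![1, 5, 2; 5, 1, 3; 2, 3, 1]
  off_diagonal := by intro i i'; fin_cases i <;> fin_cases i' <;> simp

def h3Perm : Fin 3 → Equiv.Perm (Fin 5) :=
  ![c[1, 2] * c[3, 4], c[0, 1] * c[2, 3], c[1, 4] * c[2, 3]]

set_option maxRecDepth 10000 in
lemma h3Perm_isLiftable : H3Matrix.IsLiftable h3Perm := by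
  unfold CoxeterMatrix.IsLiftable
  decide

lemma h3Perm_closure_le_centralizer :
    Subgroup.closure {h3Perm 0, h3Perm 2} ≤ Subgroup.centralizer {h3Perm 0, h3Perm 2} := by
  rw [Subgroup.closure_le]
  intro q hq
  simp only [Set.mem_insert_iff, Set.mem_singleton_iff] at hq
  simp only [SetLike.mem_coe, Subgroup.mem_centralizer_iff, Set.mem_insert_iff,
    Set.mem_singleton_iff, forall_eq_or_imp, forall_eq]
  rcases hq with rfl | rfl <;> decide

set_option maxRecDepth 10000 in
lemma h3Perm_conj_ne_of_mem_centralizer {q : Equiv.Perm (Fin 5)}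
    (hq : q ∈ Subgroup.centralizer {h3Perm 0, h3Perm 2}) :
    q * h3Perm 1 * q⁻¹ ≠ h3Perm 1 * h3Perm 0 * h3Perm 1 := by
  simp only [Subgroup.mem_centralizer_iff, Set.mem_insert_iff, Set.mem_singleton_iff,
    forall_eq_or_imp, forall_eq] at hq
  revert q
  decide

lemma eq_mul_mul_conj_pow_of_mul_pow_odd {G : Type*} [Group G] {a b : G} {k : ℕ}
    (ha : a * a = 1) (hab : (a * b) ^ (2 * k + 1) = 1) :
    b = a * (a * (b * a * b)) ^ (k + 1) := by
  have hsq : a * (b * a * b) = (a * b) ^ 2 := by simp only [pow_two, mul_assoc]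
  rw [hsq, ← pow_mul, show 2 * (k + 1) = (2 * k + 1) + 1 by ring, pow_succ, hab, one_mul,
    ← mul_assoc, ha, one_mul]

namespace CoxeterSystem

variable {B W : Type*} [Group W] {M : CoxeterMatrix B} (cs : CoxeterSystem M W)

theorem eq_top_of_forall_simple_mem {H : Subgroup W} (h : ∀ i, cs.simple i ∈ H) : H = ⊤ := by
  rw [eq_top_iff, ← cs.subgroup_closure_range_simple, Subgroup.closure_le]
  rintro _ ⟨i, rfl⟩
  exact h i

theorem simple_mem_closure_simple_conj {i j : B} (hodd : Odd (M i j)) :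
    cs.simple j ∈ Subgroup.closure {cs.simple i, cs.simple j * cs.simple i * cs.simple j} := by
  obtain ⟨k, hk⟩ := hodd
  have hi : cs.simple i ∈ Subgroup.closure {cs.simple i, cs.simple j * cs.simple i * cs.simple j} :=
    Subgroup.subset_closure (by simp)
  have hconj : cs.simple j * cs.simple i * cs.simple j ∈
      Subgroup.closure {cs.simple i, cs.simple j * cs.simple i * cs.simple j} :=
    Subgroup.subset_closure (by simp)
  have hmem := mul_mem hi (pow_mem (mul_mem hi hconj) (k + 1))
  rwa [← eq_mul_mul_conj_pow_of_mul_pow_odd (cs.simple_mul_simple_self i)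
    (hk ▸ cs.simple_mul_simple_pow i j)] at hmem

end CoxeterSystem

lemma conj_simple_one_ne_of_mem_closure {W : Type*} [Group W] (cs : CoxeterSystem H3Matrix W)
    {p : W} (hp : p ∈ Subgroup.closure {cs.simple 0, cs.simple 2}) :
    p * cs.simple 1 * p⁻¹ ≠ cs.simple 1 * cs.simple 0 * cs.simple 1 := by
  intro hconj
  let ρ := cs.lift ⟨h3Perm, h3Perm_isLiftable⟩
  have hρ : ∀ i, ρ (cs.simple i) = h3Perm i := cs.lift_apply_simple h3Perm_isLiftable
  have hρp : ρ p ∈ Subgroup.closure {h3Perm 0, h3Perm 2} := by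
    simpa [MonoidHom.map_closure, Set.image_pair, hρ] using Subgroup.mem_map_of_mem ρ hp
  refine h3Perm_conj_ne_of_mem_centralizer (h3Perm_closure_le_centralizer hρp) ?_
  simpa [hρ] using congrArg ρ hconj

theorem stmt_15 (W : Type*) [Group W] (cs : CoxeterSystem H3Matrix W)
    (P : Subgroup W) (hP : P = Subgroup.closure {cs.simple 0, cs.simple 2}) :
    P ⊔ Subgroup.closure {cs.simple 1} = ⊤ ∧
      P ⊔ Subgroup.closure {cs.simple 1 * cs.simple 0 * cs.simple 1} = ⊤ ∧
      ¬∃ p ∈ P, p * cs.simple 1 * p⁻¹ = cs.simple 1 * cs.simple 0 * cs.simple 1 := by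
  subst hP
  have hs0 : cs.simple 0 ∈ Subgroup.closure {cs.simple 0, cs.simple 2} :=
    Subgroup.subset_closure (by simp)
  have hs2 : cs.simple 2 ∈ Subgroup.closure {cs.simple 0, cs.simple 2} :=
    Subgroup.subset_closure (by simp)
  refine ⟨cs.eq_top_of_forall_simple_mem fun i => ?_, cs.eq_top_of_forall_simple_mem fun i => ?_, ?_⟩
  · fin_cases i
    · exact Subgroup.mem_sup_left hs0
    · exact Subgroup.mem_sup_right (Subgroup.mem_closure_singleton_self _)
    · exact Subgroup.mem_sup_left hs2
  · fin_cases i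
    · exact Subgroup.mem_sup_left hs0
    · refine (Subgroup.closure_le _).mpr ?_ (cs.simple_mem_closure_simple_conj (i := 0) ⟨2, rfl⟩)
      rintro _ (rfl | rfl)
      · exact Subgroup.mem_sup_left hs0
      · exact Subgroup.mem_sup_right (Subgroup.mem_closure_singleton_self _)
    · exact Subgroup.mem_sup_left hs2
  · rintro ⟨p, hp, hconj⟩
    exact conj_simple_one_ne_of_mem_closure cs hp hconj
end
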